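/- For x, y ∈ {0,1}^n and an operator A on (ℂ²)^{⊗n}, one has ⟨x̃|(A⊗I)|ỹ⟩ = 2^{-(w(x)+w(y))/2} ∑_{b∈S} ⟨x+b|A|y+b⟩, where w denotes Hamming weight, S = {b ∈ {0,1}^n : b_i = 0 whenever x_i·y_i ≠ 1}, and + is bitwise XOR. -/

import Mathlib

/-! Write a basis state of the `2n` qubits as `(a, c)`, where `a` collects the first and `c` the
second qubits of the pairs. Then `|x̃ᵢ⟩ = ∑_{cᵢ ≤ xᵢ} 2^{-xᵢ/2} |xᵢ + cᵢ⟩|cᵢ⟩`, hence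
`|x̃⟩ = 2^{-w(x)/2} ∑_{c ≤ x} |x + c⟩|c⟩`. As `A ⊗ I` leaves the second register untouched,
only equal second registers `c` pair up in `⟨x̃|(A⊗I)|ỹ⟩`, and they range over `c ≤ x ⊓ y`,
which is `S`. -/

open Matrix

/-- The two-qubit state assigned to a bit: `|00⟩` for `0`, `(|01⟩+|10⟩)/√2` for `1`. -/
noncomputable def pairState (b : Fin 2) : Fin 2 × Fin 2 → ℂ :=
  if b = 0 then (fun p => if p = (0, 0) then 1 else 0)
  else (fun p => if p.1 = p.2 then 0 else ((1 / Real.sqrt 2 : ℝ) : ℂ))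

/-- The `2n`-qubit state `|x̃⟩ = ⊗ᵢ |x̃ᵢ⟩`. -/
noncomputable def tilde (n : ℕ) (x : Fin n → Fin 2) : (Fin n → Fin 2 × Fin 2) → ℂ :=
  fun f => ∏ i, pairState (x i) (f i)

/-- `A ⊗ I`, with `A` acting on the first qubit of each of the `n` pairs. -/
def AI (n : ℕ) (A : Matrix (Fin n → Fin 2) (Fin n → Fin 2) ℂ) :
    Matrix (Fin n → Fin 2 × Fin 2) (Fin n → Fin 2 × Fin 2) ℂ :=
  fun f g => A (fun i => (f i).1) (fun i => (g i).1) *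
    (if (fun i => (f i).2) = (fun i => (g i).2) then 1 else 0)

/-- Hamming weight of a binary string. -/
def hWeight {n : ℕ} (x : Fin n → Fin 2) : ℕ :=
  (Finset.univ.filter fun i => x i = 1).card

lemma Fintype.sum_arrow_prod {ι α β M : Type*} [Fintype ι] [DecidableEq ι] [Fintype α] [Fintype β]
    [AddCommMonoid M] (g : (ι → α × β) → M) :
    ∑ f, g f = ∑ c, ∑ a, g (Function.prod a c) := by
  rw [← (Equiv.arrowProdEquivProdArrow ι (fun _ => α) (fun _ => β)).symm.sum_comp,
    Fintype.sum_prod_type, Finset.sum_comm]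
  rfl

lemma le_inf_iff_forall_mul_ne_one {ι : Type*} (b x y : ι → Fin 2) :
    b ≤ x ⊓ y ↔ ∀ i, x i * y i ≠ 1 → b i = 0 := by
  refine Pi.le_def.trans (forall_congr' fun i => ?_)
  rw [Pi.inf_apply]
  generalize b i = u; generalize x i = v; generalize y i = w
  revert u v w; decide

lemma one_div_sqrt_two_pow (m : ℕ) : (1 / Real.sqrt 2) ^ m = (2 : ℝ) ^ (-(m : ℝ) / 2) := by
  rw [one_div, inv_pow, Real.sqrt_eq_rpow, ← Real.rpow_natCast, ← Real.rpow_mul zero_le_two,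
    ← Real.rpow_neg zero_le_two]
  ring_nf

open Classical in
noncomputable def tildeCoeff {n : ℕ} (x c : Fin n → Fin 2) : ℂ :=
  if c ≤ x then ((1 / Real.sqrt 2 : ℝ) : ℂ) ^ hWeight x else 0

lemma pairState_apply (b a c : Fin 2) :
    pairState b (a, c) =
      if a = b + c then (if c ≤ b then (if b = 1 then ((1 / Real.sqrt 2 : ℝ) : ℂ) else 1) else 0)
      else 0 := by
  fin_cases b <;> fin_cases a <;> fin_cases c <;> simp [pairState]

lemma tilde_prod_apply {n : ℕ} (x a c : Fin n → Fin 2) :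
    tilde n x (Function.prod a c) = if a = x + c then tildeCoeff x c else 0 := by
  classical
  simp only [tilde, Function.prod, pairState_apply, Fintype.prod_ite_zero, tildeCoeff]
  simp only [Finset.prod_ite, Finset.prod_const_one, Finset.prod_const, mul_one]
  simp only [funext_iff, Pi.le_def, Pi.add_apply]
  rfl

lemma AI_prod_apply {n : ℕ} (A : Matrix (Fin n → Fin 2) (Fin n → Fin 2) ℂ)
    (a c a' c' : Fin n → Fin 2) :
    AI n A (Function.prod a c) (Function.prod a' c') = A a a' * if c = c' then 1 else 0 :=
  rfl

lemma AI_mulVec_tilde_prod_apply {n : ℕ} (A : Matrix (Fin n → Fin 2) (Fin n → Fin 2) ℂ)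
    (y a c : Fin n → Fin 2) :
    (AI n A *ᵥ tilde n y) (Function.prod a c) = A a (y + c) * tildeCoeff y c := by
  classical
  simp only [mulVec, dotProduct, Fintype.sum_arrow_prod, AI_prod_apply, tilde_prod_apply]
  simp [mul_ite]

lemma star_tildeCoeff {n : ℕ} (x c : Fin n → Fin 2) : star (tildeCoeff x c) = tildeCoeff x c := by
  unfold tildeCoeff; split_ifs <;> simp [← Complex.ofReal_pow, Complex.conj_ofReal]

open Classical in
lemma tildeCoeff_mul_tildeCoeff {n : ℕ} (x y c : Fin n → Fin 2) :
    tildeCoeff x c * tildeCoeff y c = if c ≤ x ⊓ y then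
      (((2 : ℝ) ^ (-(((hWeight x + hWeight y : ℕ) : ℝ)) / 2) : ℝ) : ℂ) else 0 := by
  simp only [tildeCoeff, le_inf_iff, ← one_div_sqrt_two_pow, pow_add]
  by_cases hx : c ≤ x <;> by_cases hy : c ≤ y <;> simp [hx, hy]

/-- `⟨x̃|(A⊗I)|ỹ⟩ = 2^{-(w(x)+w(y))/2} ∑_{b ∈ S} ⟨x+b|A|y+b⟩`, where
`S = {b : bᵢ = 0 whenever xᵢ·yᵢ ≠ 1}` and `+` is bitwise XOR. -/
theorem stmt13 (n : ℕ) (A : Matrix (Fin n → Fin 2) (Fin n → Fin 2) ℂ)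
    (x y : Fin n → Fin 2) :
    star (tilde n x) ⬝ᵥ (AI n A).mulVec (tilde n y) =
      (((2 : ℝ) ^ (-(((hWeight x + hWeight y : ℕ) : ℝ)) / 2) : ℝ) : ℂ) *
        ∑ b : Fin n → Fin 2,
          (if ∀ i, x i * y i ≠ 1 → b i = 0 then A (x + b) (y + b) else 0) := by
  classical
  calc star (tilde n x) ⬝ᵥ (AI n A).mulVec (tilde n y)
      = ∑ c, tildeCoeff x c * A (x + c) (y + c) * tildeCoeff y c := by
        simp only [dotProduct, Fintype.sum_arrow_prod, Pi.star_apply, tilde_prod_apply,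
          AI_mulVec_tilde_prod_apply, apply_ite star, star_zero, star_tildeCoeff, ite_mul, zero_mul,
          Finset.sum_ite_eq', Finset.mem_univ, if_true, mul_assoc]
    _ = _ := by
        simp only [Finset.mul_sum, ← le_inf_iff_forall_mul_ne_one]
        refine Finset.sum_congr rfl fun c _ => ?_
        rw [mul_right_comm, tildeCoeff_mul_tildeCoeff]
        split_ifs <;> simp
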